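/- For every integer p ≥ 1 and every z ∈ [0,1], the B-spline basis supplemented for the Neumann boundary condition forms a partition of unity: ∑_{n=0}^{l−p−1} b_n^p(z) + b_L^p(z) + b_R^p(z) = 1. -/

import Mathlib

/-
On a knot interval [z_m, z_{m+1}) only b_{m-p}^p, …, b_m^p can be nonzero. Summing the
Cox–de Boor recursion over them, b_n^p receives the weight ω = (z − z_n)/((p+1)Δz) from
b_n^{p+1} and the weight 1 − ω from b_{n-1}^{p+1}, so the sum is the same in every degree and
equals 1. The end point z = 1 = z_l is covered because b_l^p vanishes at its first knot when
p ≥ 1. The cut-offs in b_L^p and b_R^p only remove splines that vanish on [0,1] anyway, so the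
three sums together are the full sum over n ∈ [−p, l − 1].
-/

/-- Uniform knots `z_j = j · Δz`. -/
noncomputable def knot (Δz : ℝ) (j : ℤ) : ℝ := j * Δz

/-- B-spline basis functions `b_n^p` on uniform knots, defined by the
Cox–de Boor recursion. -/
noncomputable def bspline (Δz : ℝ) : ℕ → ℤ → ℝ → ℝ
  | 0, n, z => if knot Δz n ≤ z ∧ z < knot Δz (n + 1) then 1 else 0
  | p + 1, n, z =>
      ((z - knot Δz n) / (knot Δz (n + (p : ℤ) + 1) - knot Δz n)) * bspline Δz p n z +
      ((knot Δz (n + (p : ℤ) + 2) - z) / (knot Δz (n + (p : ℤ) + 2) - knot Δz (n + 1))) *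
        bspline Δz p (n + 1) z
/-- Left boundary B-spline function `b_L^p` for the Neumann boundary condition
on `[0,1]` with `Δz = 1/l`. -/
noncomputable def bsplineL (l p : ℕ) (z : ℝ) : ℝ :=
  if 0 ≤ z ∧ z < (p : ℝ) * (1 / (l : ℝ)) then
    ∑ n ∈ Finset.Icc (-(p : ℤ)) (-1 : ℤ), bspline (1 / (l : ℝ)) p n z
  else 0

/-- Right boundary B-spline function `b_R^p` for the Neumann boundary condition
on `[0,1]` with `Δz = 1/l`. -/
noncomputable def bsplineR (l p : ℕ) (z : ℝ) : ℝ :=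
  if 1 - (p : ℝ) * (1 / (l : ℝ)) ≤ z ∧ z ≤ 1 then
    ∑ n ∈ Finset.Icc ((l : ℤ) - (p : ℤ)) ((l : ℤ) - 1), bspline (1 / (l : ℝ)) p n z
  else 0

open Finset

lemma sum_Icc_add_sum_Icc {M : Type*} [AddCommMonoid M] (f : ℤ → M) {a b c d : ℤ}
    (hc : c = b + 1) (hac : a ≤ c) (hbd : b ≤ d) :
    ∑ n ∈ Icc a b, f n + ∑ n ∈ Icc c d, f n = ∑ n ∈ Icc a d, f n := by
  rw [← sum_union (disjoint_left.2 fun x hx hx' => by simp only [mem_Icc] at hx hx'; omega)]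
  congr 1
  ext x
  simp only [mem_Icc, mem_union]
  omega

lemma sum_Icc_comp_add_one {M : Type*} [AddCommMonoid M] (f : ℤ → M) (a b : ℤ) :
    ∑ n ∈ Icc a b, f (n + 1) = ∑ n ∈ Icc (a + 1) (b + 1), f n := by
  rw [← map_add_right_Icc, sum_map]
  rfl

section UniformKnots

variable {Δz : ℝ}

lemma knot_monotone (hΔ : 0 ≤ Δz) : Monotone (knot Δz) :=
  fun _ _ h => mul_le_mul_of_nonneg_right (Int.cast_le.2 h) hΔ

lemma knot_strictMono (hΔ : 0 < Δz) : StrictMono (knot Δz) :=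
  fun _ _ h => mul_lt_mul_of_pos_right (Int.cast_lt.2 h) hΔ

lemma knot_sub_knot (a b : ℤ) : knot Δz a - knot Δz b = ((a - b : ℤ) : ℝ) * Δz := by
  unfold knot; push_cast; ring

lemma exists_knot_le_lt_knot (hΔ : 0 < Δz) (z : ℝ) :
    ∃ m : ℤ, knot Δz m ≤ z ∧ z < knot Δz (m + 1) := by
  refine ⟨⌊z / Δz⌋, ?_, ?_⟩
  · exact (le_div_iff₀ hΔ).1 (Int.floor_le _)
  · rw [knot, Int.cast_add, Int.cast_one, ← div_lt_iff₀ hΔ]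
    exact Int.lt_floor_add_one _

lemma bspline_eq_zero_of_lt_knot (hΔ : 0 ≤ Δz) (p : ℕ) {n : ℤ} {z : ℝ}
    (hz : z < knot Δz n) : bspline Δz p n z = 0 := by
  induction p generalizing n with
  | zero => simp [bspline, not_le.2 hz]
  | succ p ih =>
    have hz' : z < knot Δz (n + 1) := hz.trans_le (knot_monotone hΔ (by omega))
    simp [bspline, ih hz, ih hz']

lemma bspline_eq_zero_of_knot_le (hΔ : 0 ≤ Δz) (p : ℕ) {n : ℤ} {z : ℝ}
    (hz : knot Δz (n + p + 1) ≤ z) : bspline Δz p n z = 0 := by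
  induction p generalizing n with
  | zero => simp_all [bspline]
  | succ p ih =>
    have h₁ : knot Δz (n + p + 1) ≤ z := (knot_monotone hΔ (by omega)).trans hz
    have h₂ : knot Δz (n + 1 + p + 1) ≤ z := by
      convert hz using 2; push_cast; ring
    simp [bspline, ih h₁, ih h₂]

lemma bspline_succ_knot_self (hΔ : 0 < Δz) (p : ℕ) (n : ℤ) :
    bspline Δz (p + 1) n (knot Δz n) = 0 := by
  simp [bspline, bspline_eq_zero_of_lt_knot hΔ.le p (knot_strictMono hΔ (lt_add_one n))]

lemma bspline_succ (hΔ : Δz ≠ 0) (p : ℕ) (n : ℤ) (z : ℝ) :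
    bspline Δz (p + 1) n z =
      (z - knot Δz n) / ((p + 1) * Δz) * bspline Δz p n z +
        (1 - (z - knot Δz (n + 1)) / ((p + 1) * Δz)) * bspline Δz p (n + 1) z := by
  have hd : ((p : ℝ) + 1) * Δz ≠ 0 := mul_ne_zero (by positivity) hΔ
  have e₁ : knot Δz (n + p + 1) - knot Δz n = (p + 1) * Δz := by
    rw [knot_sub_knot]; push_cast; ring
  have e₂ : knot Δz (n + p + 2) - knot Δz (n + 1) = (p + 1) * Δz := by
    rw [knot_sub_knot]; push_cast; ring
  have e₃ : knot Δz (n + p + 2) - z = (p + 1) * Δz - (z - knot Δz (n + 1)) := by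
    rw [← e₂]; ring
  rw [bspline, e₁, e₂, e₃, sub_div ((p + 1 : ℝ) * Δz), div_self hd]

lemma sum_Icc_mul_bspline_eq_sum_window (hΔ : 0 ≤ Δz) (p : ℕ) {m a b : ℤ} {z : ℝ}
    (hm : knot Δz m ≤ z) (hm' : z < knot Δz (m + 1)) (ha : a ≤ m - p) (hb : m ≤ b)
    (g : ℤ → ℝ) :
    ∑ n ∈ Icc a b, g n * bspline Δz p n z = ∑ n ∈ Icc (m - p) m, g n * bspline Δz p n z := by
  refine (sum_subset (fun x hx => by simp only [mem_Icc] at hx ⊢; omega) ?_).symm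
  intro n hn hn'
  simp only [mem_Icc, not_and_or, not_le] at hn hn'
  rcases hn' with h | h
  · rw [bspline_eq_zero_of_knot_le hΔ p ((knot_monotone hΔ (by omega)).trans hm), mul_zero]
  · rw [bspline_eq_zero_of_lt_knot hΔ p (hm'.trans_le (knot_monotone hΔ (by omega))), mul_zero]

lemma sum_Icc_bspline_window_eq_one (hΔ : 0 < Δz) (p : ℕ) {m : ℤ} {z : ℝ}
    (hm : knot Δz m ≤ z) (hm' : z < knot Δz (m + 1)) :
    ∑ n ∈ Icc (m - p) m, bspline Δz p n z = 1 := by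
  induction p with
  | zero => simp only [CharP.cast_eq_zero, sub_zero, Icc_self, sum_singleton, bspline, hm, hm',
      and_self, if_true]
  | succ p ih =>
    set w : ℤ → ℝ := fun n => (z - knot Δz n) / ((p + 1) * Δz)
    have hshift : ∑ n ∈ Icc (m - (p + 1 : ℕ)) m, (1 - w (n + 1)) * bspline Δz p (n + 1) z =
        ∑ n ∈ Icc (m - p) (m + 1), (1 - w n) * bspline Δz p n z := by
      rw [sum_Icc_comp_add_one (fun n => (1 - w n) * bspline Δz p n z)]
      congr 2; push_cast; ring
    calc ∑ n ∈ Icc (m - (p + 1 : ℕ)) m, bspline Δz (p + 1) n z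
        = ∑ n ∈ Icc (m - (p + 1 : ℕ)) m, w n * bspline Δz p n z +
            ∑ n ∈ Icc (m - p) (m + 1), (1 - w n) * bspline Δz p n z := by
          rw [← hshift, ← sum_add_distrib]
          exact sum_congr rfl fun n _ => bspline_succ hΔ.ne' p n z
      _ = ∑ n ∈ Icc (m - p) m, w n * bspline Δz p n z +
            ∑ n ∈ Icc (m - p) m, (1 - w n) * bspline Δz p n z := by
          rw [sum_Icc_mul_bspline_eq_sum_window hΔ.le p hm hm' (by omega) le_rfl,
            sum_Icc_mul_bspline_eq_sum_window hΔ.le p hm hm' le_rfl (lt_add_one m).le]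
      _ = 1 := by simp only [← sum_add_distrib, ← add_mul, add_sub_cancel, one_mul, ih]

lemma sum_Icc_bspline_eq_one_of_mem_Ico (hΔ : 0 < Δz) (p : ℕ) {m a b : ℤ} {z : ℝ}
    (hm : knot Δz m ≤ z) (hm' : z < knot Δz (m + 1)) (ha : a ≤ m - p) (hb : m ≤ b) :
    ∑ n ∈ Icc a b, bspline Δz p n z = 1 := by
  have h := sum_Icc_mul_bspline_eq_sum_window hΔ.le p hm hm' ha hb fun _ => 1
  simp only [one_mul] at h
  rw [h, sum_Icc_bspline_window_eq_one hΔ p hm hm']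

lemma sum_Icc_bspline_eq_one_of_mem_Icc (hΔ : 0 < Δz) {p : ℕ} (hp : p ≠ 0)
    {a b : ℤ} {z : ℝ} (hab : a < b) (ha : knot Δz a ≤ z) (hb : z ≤ knot Δz b) :
    ∑ n ∈ Icc (a - p) (b - 1), bspline Δz p n z = 1 := by
  rcases hb.lt_or_eq with hb | rfl
  · obtain ⟨m, hm, hm'⟩ := exists_knot_le_lt_knot hΔ z
    have ham : a < m + 1 := (knot_strictMono hΔ).lt_iff_lt.1 (ha.trans_lt hm')
    have hmb : m < b := (knot_strictMono hΔ).lt_iff_lt.1 (hm.trans_lt hb)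
    exact sum_Icc_bspline_eq_one_of_mem_Ico hΔ p hm hm' (by omega) (by omega)
  · obtain ⟨q, rfl⟩ := Nat.exists_eq_succ_of_ne_zero hp
    have h := sum_Icc_bspline_eq_one_of_mem_Ico hΔ (q + 1) le_rfl
      (knot_strictMono hΔ (lt_add_one b)) (a := a - (q + 1 : ℕ)) (b := b) (by omega) le_rfl
    rwa [← sum_Icc_add_sum_Icc _ (b := b - 1) (c := b) (by ring) (by omega) (by omega),
      Icc_self, sum_singleton, bspline_succ_knot_self hΔ, add_zero] at h

end UniformKnots

lemma bsplineL_eq_sum (l p : ℕ) {z : ℝ} (hz : 0 ≤ z) :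
    bsplineL l p z = ∑ n ∈ Icc (-(p : ℤ)) (-1), bspline (1 / (l : ℝ)) p n z := by
  unfold bsplineL
  split_ifs with h
  · rfl
  · have hpz : knot (1 / (l : ℝ)) p ≤ z := by
      simpa [knot, hz] using h
    refine (sum_eq_zero fun n hn => bspline_eq_zero_of_knot_le (by positivity) p ?_).symm
    simp only [mem_Icc] at hn
    exact (knot_monotone (by positivity) (by omega)).trans hpz

lemma bsplineR_eq_sum {l : ℕ} (hl : 0 < l) (p : ℕ) {z : ℝ} (hz : z ≤ 1) :
    bsplineR l p z = ∑ n ∈ Icc ((l : ℤ) - p) (l - 1), bspline (1 / (l : ℝ)) p n z := by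
  unfold bsplineR
  split_ifs with h
  · rfl
  · have hpz : z < knot (1 / (l : ℝ)) (l - p) := by
      have e : knot (1 / (l : ℝ)) (l - p) = 1 - p * (1 / l) := by
        simp only [knot, Int.cast_sub, Int.cast_natCast, one_div]
        field_simp
      exact e ▸ lt_of_not_ge fun h' => h ⟨h', hz⟩
    refine (sum_eq_zero fun n hn => bspline_eq_zero_of_lt_knot (by positivity) p ?_).symm
    simp only [mem_Icc] at hn
    exact hpz.trans_le (knot_monotone (by positivity) (by omega))

/-- Partition of unity for the B-spline basis on `[0,1]` supplemented for the
Neumann boundary condition. -/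
theorem bspline_neumann_partition_of_unity (l p : ℕ) (hp : 1 ≤ p) (hl : p < l)
    (z : ℝ) (hz0 : 0 ≤ z) (hz1 : z ≤ 1) :
    (∑ n ∈ Finset.Icc (0 : ℤ) ((l : ℤ) - (p : ℤ) - 1), bspline (1 / (l : ℝ)) p n z) +
      bsplineL l p z + bsplineR l p z = 1 := by
  have hl0 : 0 < l := by omega
  have hΔ : (0 : ℝ) < 1 / l := by positivity
  have hsum := sum_Icc_bspline_eq_one_of_mem_Icc hΔ (p := p) (a := 0) (b := l)
    (by omega) (by omega) (by simpa [knot]) (by simpa [knot, hl0.ne'])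
  rw [bsplineL_eq_sum l p hz0, bsplineR_eq_sum hl0 p hz1, add_comm (∑ n ∈ Icc (0 : ℤ) _, _),
    sum_Icc_add_sum_Icc _ (by omega) (by omega) (by omega),
    sum_Icc_add_sum_Icc _ (by omega) (by omega) (by omega)]
  simpa using hsum
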